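/- arXiv:2307.01108 — 5 statements merged into one kernel-verified Lean document; each statement's English description precedes it below -/
import Mathlib

section
/- Let B⁺ be a commutative ring and let (t, a₁, …, aₙ) be a regular sequence in B⁺. Let C⁺ := (B⁺[X₁, …, Xₙ]/(tX₁ − a₁, …, tXₙ − aₙ)). Then the quotient C⁺/(t) is isomorphic to the polynomial ring (B⁺/(t, a₁, …, aₙ))[X₁, …, Xₙ]; in particular the images of X₁, …, Xₙ (i.e. of a₁/t, …, aₙ/t) form a regular sequence in C⁺/(t). -/
/-! Modulo `t` the relation `tXᵢ - aᵢ` becomes `-aᵢ`, so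
`C⁺/(t) = B[X]/(t, a₁, …, aₙ) = (B/(t, a))[X]`, and `B/(t, a)` is nonzero because a regular
sequence generates a proper ideal. Over a nonzero ring the variables form a regular sequence:
`X₀` is a nonzerodivisor, and killing it leaves the polynomial ring in the remaining variables. -/

set_option synthInstance.maxHeartbeats 1000000
set_option maxHeartbeats 1000000

open MvPolynomial

variable {B : Type*} [CommRing B]

/-- The ideal `(tX₁ - a₁, …, tXₙ - aₙ)` of `B[X₁,…,Xₙ]`. -/
noncomputable def stmt0RelIdeal (n : ℕ) (t : B) (a : Fin n → B) :
    Ideal (MvPolynomial (Fin n) B) :=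
  Ideal.span (Set.range fun i => C t * X i - C (a i))

/-- The ring `C⁺ = B[X₁,…,Xₙ]/(tXᵢ - aᵢ)`. -/
noncomputable abbrev stmt0Cplus (n : ℕ) (t : B) (a : Fin n → B) : Type _ :=
  MvPolynomial (Fin n) B ⧸ stmt0RelIdeal n t a

/-- The quotient `C⁺/(t)`. -/
noncomputable abbrev stmt0CplusModT (n : ℕ) (t : B) (a : Fin n → B) : Type _ :=
  stmt0Cplus n t a ⧸
    Ideal.span {Ideal.Quotient.mk (stmt0RelIdeal n t a) (C t)}

/-- The image of `Xᵢ` (i.e. of `aᵢ/t`) in `C⁺/(t)`. -/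
noncomputable def stmt0Xbar (n : ℕ) (t : B) (a : Fin n → B) (i : Fin n) :
    stmt0CplusModT n t a :=
  Ideal.Quotient.mk _ (Ideal.Quotient.mk (stmt0RelIdeal n t a) (X i))

open RingTheory.Sequence Pointwise

section Regular

variable {R S : Type*} [CommRing R] [CommRing S]

theorem RingTheory.Sequence.IsRegular.ofList_ne_top {rs : List R} (h : IsRegular R rs) :
    Ideal.ofList rs ≠ ⊤ := by
  intro htop
  apply h.top_ne_smul
  rw [htop, smul_eq_mul, Ideal.mul_top]

theorem RingEquiv.isRegular_congr (e : R ≃+* S) (rs : List R) :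
    IsRegular R rs ↔ IsRegular S (rs.map e) :=
  AddEquiv.isRegular_congr (e := e.toAddEquiv) <| List.forall₂_map_right_iff.mpr <|
    List.forall₂_same.mpr fun r _ x => map_mul e r x

theorem RingTheory.Sequence.IsRegular.cons_of_quotientEquiv {r : R} (hr : IsSMulRegular R r)
    (e : R ⧸ Ideal.span {r} ≃+* S) {rs : List R}
    (h : IsRegular S (rs.map (e ∘ Ideal.Quotient.mk _))) : IsRegular R (r :: rs) := by
  refine .cons hr ?_
  have hspan : r • (⊤ : Submodule R R) = Ideal.span {r} := by
    rw [← Submodule.ideal_span_singleton_smul, smul_eq_mul, Ideal.mul_top]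
  let f : QuotSMulTop r R ≃+ S :=
    (Submodule.quotEquivOfEq _ _ hspan).toAddEquiv.trans e.toAddEquiv
  refine (AddEquiv.isRegular_congr (e := f) ?_).mpr h
  refine List.forall₂_map_right_iff.mpr <| List.forall₂_same.mpr fun s _ x => ?_
  obtain ⟨p, rfl⟩ := Submodule.Quotient.mk_surjective _ x
  exact map_mul e (Ideal.Quotient.mk _ s) (Ideal.Quotient.mk _ p)

end Regular

namespace MvPolynomial

variable (S : Type*) [CommRing S] (n : ℕ)

noncomputable def quotientSpanXZeroEquiv :
    MvPolynomial (Fin (n + 1)) S ⧸ Ideal.span {(X 0 : MvPolynomial (Fin (n + 1)) S)} ≃+*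
      MvPolynomial (Fin n) S :=
  (Ideal.quotientEquiv _ (Ideal.span {Polynomial.X - Polynomial.C (0 : MvPolynomial (Fin n) S)})
      (finSuccEquiv S n).toRingEquiv (by simp [Ideal.map_span, finSuccEquiv_X_zero])).trans
    (Polynomial.quotientSpanXSubCAlgEquiv 0).toRingEquiv

@[simp]
theorem quotientSpanXZeroEquiv_mk_X_succ (i : Fin n) :
    quotientSpanXZeroEquiv S n (Ideal.Quotient.mk _ (X i.succ)) = X i := by
  simp [quotientSpanXZeroEquiv, finSuccEquiv_X_succ]

theorem isRegular_ofFn_X [Nontrivial S] :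
    IsRegular (MvPolynomial (Fin n) S) (List.ofFn (X : Fin n → MvPolynomial (Fin n) S)) := by
  induction n with
  | zero => exact .nil _ _
  | succ n ih =>
    rw [List.ofFn_succ]
    refine IsRegular.cons_of_quotientEquiv isRegular_X.left.isSMulRegular
      (quotientSpanXZeroEquiv S n) ?_
    simpa [List.map_ofFn, Function.comp_def] using ih

end MvPolynomial

section Cplus

variable (n : ℕ) (t : B) (a : Fin n → B)

theorem stmt0RelIdeal_sup_span_C :
    stmt0RelIdeal n t a ⊔ Ideal.span {C t} =
      Ideal.map (C : B →+* MvPolynomial (Fin n) B) (Ideal.span (insert t (Set.range a))) := by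
  set I := stmt0RelIdeal n t a ⊔ Ideal.span {C t}
  have hCt : C t ∈ I := Ideal.mem_sup_right (Ideal.mem_span_singleton_self _)
  apply le_antisymm
  · refine sup_le (Ideal.span_le.mpr ?_) (Ideal.span_le.mpr ?_)
    · rintro _ ⟨i, rfl⟩
      have hmem {b : B} (hb : b ∈ insert t (Set.range a)) :=
        Ideal.mem_map_of_mem (C : B →+* MvPolynomial (Fin n) B) (Ideal.subset_span hb)
      exact sub_mem (Ideal.mul_mem_right _ _ (hmem (.inl rfl))) (hmem (.inr ⟨i, rfl⟩))
    · rintro _ rfl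
      exact Ideal.mem_map_of_mem _ (Ideal.subset_span (.inl rfl))
  · rw [Ideal.map_le_iff_le_comap, Ideal.span_le]
    rintro _ (rfl | ⟨i, rfl⟩)
    · exact hCt
    · exact (Submodule.sub_mem_iff_right _ (Ideal.mul_mem_right (X i) _ hCt)).mp
        (Ideal.mem_sup_left (Ideal.subset_span ⟨i, rfl⟩))

noncomputable def stmt0CplusModTEquiv :
    stmt0CplusModT n t a ≃+* MvPolynomial (Fin n) (B ⧸ Ideal.span (insert t (Set.range a))) :=
  (Ideal.quotEquivOfEq (by rw [Ideal.map_span, Set.image_singleton])).trans <|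
    (DoubleQuot.quotQuotEquivQuotSup _ _).trans <|
      (Ideal.quotEquivOfEq (by
          rw [ker_map, Ideal.mk_ker, stmt0RelIdeal_sup_span_C])).trans <|
        RingHom.quotientKerEquivOfSurjective (map_surjective _ Ideal.Quotient.mk_surjective)

theorem stmt0CplusModTEquiv_Xbar (i : Fin n) :
    stmt0CplusModTEquiv n t a (stmt0Xbar n t a i) = X i :=
  map_X _ i

end Cplus

/-- if `(t, a₁, …, aₙ)` is a regular sequence in `B⁺` and
`C⁺ = B⁺[X₁,…,Xₙ]/(tXᵢ - aᵢ)`, then `C⁺/(t) ≅ (B⁺/(t,a₁,…,aₙ))[X₁,…,Xₙ]` via an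
isomorphism sending (the image of) `Xᵢ` to `Xᵢ`; in particular the images of the
`Xᵢ` form a regular sequence in `C⁺/(t)`. -/
theorem stmt0 (n : ℕ) (t : B) (a : Fin n → B)
    (hreg : RingTheory.Sequence.IsRegular B (t :: List.ofFn a)) :
    (∃ e : stmt0CplusModT n t a ≃+*
        MvPolynomial (Fin n) (B ⧸ Ideal.span (insert t (Set.range a))),
      ∀ i : Fin n, e (stmt0Xbar n t a i) = X i) ∧
    RingTheory.Sequence.IsRegular (stmt0CplusModT n t a)
      (List.ofFn (stmt0Xbar n t a)) := by
  have hJ : Ideal.ofList (t :: List.ofFn a) = Ideal.span (insert t (Set.range a)) := by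
    simp only [Ideal.ofList, List.mem_cons, List.mem_ofFn']
    rfl
  have : Nontrivial (B ⧸ Ideal.span (insert t (Set.range a))) :=
    Ideal.Quotient.nontrivial_iff.mpr (hJ ▸ hreg.ofList_ne_top)
  refine ⟨⟨_, stmt0CplusModTEquiv_Xbar n t a⟩, ?_⟩
  rw [(stmt0CplusModTEquiv n t a).isRegular_congr, List.map_ofFn,
    show ⇑(stmt0CplusModTEquiv n t a) ∘ stmt0Xbar n t a = X from
      funext (stmt0CplusModTEquiv_Xbar n t a)]
  exact isRegular_ofFn_X _ n
end

section
/- Let R be a commutative ring, t, a, b ∈ R with a and b nonzerodivisors in R, and suppose (a, b) is a regular sequence in R/(tⁿ) for a fixed n ≥ 1 (i.e. a is a nonzerodivisor in R/(tⁿ) and b is a nonzerodivisor in R/(tⁿ, a)). Then inside the localization (R/(tⁿ))[(ab)⁻¹], the intersection of the subrings (R/(tⁿ))[a⁻¹] and (R/(tⁿ))[b⁻¹] equals R/(tⁿ). Precisely: if f ∈ (R/(tⁿ))[(ab)⁻¹] can be written both as g/aˡ with g ∈ R/(tⁿ) and as h/bᵏ with h ∈ R/(tⁿ), then f lies in the image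 of R/(tⁿ). -/
/-! If `bᵏ f` and `aˡ f` both come from `S`, then `bᵏ g = aˡ h` in `S` up to a power of `ab`
(with `g = aˡ f`, `h = bᵏ f`); cancelling powers of `a` and using that `b` is regular modulo
`a`, one peels off one factor `a` of `g` at a time, so `g = aˡ g'` and `f = g'`. -/

open Ideal

namespace RegularSequence

variable {S : Type*} [CommRing S] {a b : S}

theorem dvd_of_dvd_pow_mul
    (hb : Ideal.Quotient.mk (span {a}) b ∈ nonZeroDivisors (S ⧸ span {a}))
    {g : S} (k : ℕ) (hg : a ∣ b ^ k * g) : a ∣ g := by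
  rw [← mem_span_singleton, ← Ideal.Quotient.eq_zero_iff_mem] at hg ⊢
  refine (pow_mem hb k).2 _ ?_
  rw [← map_pow, ← map_mul, mul_comm, hg]

theorem pow_dvd_of_pow_mul_eq (ha : a ∈ nonZeroDivisors S)
    (hb : Ideal.Quotient.mk (span {a}) b ∈ nonZeroDivisors (S ⧸ span {a}))
    {k : ℕ} {h : S} : ∀ {l : ℕ} {g : S}, b ^ k * g = a ^ l * h → a ^ l ∣ g
  | 0, _, _ => by simp
  | l + 1, g, hgh => by
    obtain ⟨g', rfl⟩ := dvd_of_dvd_pow_mul hb k ⟨a ^ l * h, by rw [hgh, pow_succ']; ring⟩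
    have hg'h : b ^ k * g' = a ^ l * h :=
      (mul_cancel_left_mem_nonZeroDivisors ha).mp (by rw [mul_left_comm, hgh, pow_succ']; ring)
    rw [pow_succ']
    exact mul_dvd_mul_left a (pow_dvd_of_pow_mul_eq ha hb hg'h)

theorem exists_eq_algebraMap_of_pow_mul_eq {L : Type*} [CommRing L] [Algebra S L]
    [IsLocalization.Away (a * b) L] (ha : a ∈ nonZeroDivisors S)
    (hb : Ideal.Quotient.mk (span {a}) b ∈ nonZeroDivisors (S ⧸ span {a}))
    {f : L} {g h : S} {l k : ℕ}
    (hg : algebraMap S L a ^ l * f = algebraMap S L g)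
    (hh : algebraMap S L b ^ k * f = algebraMap S L h) :
    ∃ s : S, f = algebraMap S L s := by
  have hL : algebraMap S L (b ^ k * g) = algebraMap S L (a ^ l * h) := by
    rw [map_mul, map_mul, map_pow, map_pow, ← hg, ← hh]
    ring
  obtain ⟨m, hm⟩ := IsLocalization.Away.exists_of_eq (a * b) hL
  have hS : b ^ (m + k) * g = a ^ l * (b ^ m * h) :=
    (mul_cancel_left_mem_nonZeroDivisors (pow_mem ha m)).mp <| by
      rw [mul_pow] at hm
      linear_combination hm
  obtain ⟨g', rfl⟩ := pow_dvd_of_pow_mul_eq ha hb hS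
  have ha_unit : IsUnit (algebraMap S L a ^ l) :=
    (IsLocalization.Away.isUnit_of_dvd (a * b) (dvd_mul_right a b)).pow l
  refine ⟨g', ha_unit.mul_left_cancel ?_⟩
  rw [hg, map_mul, map_pow]

end RegularSequence

theorem stmt1_general {R : Type*} [CommRing R] (t a b : R) (n : ℕ)
    (haS : Ideal.Quotient.mk (Ideal.span {t ^ n}) a ∈
      nonZeroDivisors (R ⧸ Ideal.span {t ^ n}))
    (hbSa : Ideal.Quotient.mk
        (Ideal.span {Ideal.Quotient.mk (Ideal.span {t ^ n}) a}) (Ideal.Quotient.mk (Ideal.span {t ^ n}) b) ∈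
      nonZeroDivisors ((R ⧸ Ideal.span {t ^ n}) ⧸
        Ideal.span {Ideal.Quotient.mk (Ideal.span {t ^ n}) a}))
    (f : Localization.Away
      (Ideal.Quotient.mk (Ideal.span {t ^ n}) a * Ideal.Quotient.mk (Ideal.span {t ^ n}) b))
    (hfa : ∃ (g : R ⧸ Ideal.span {t ^ n}) (l : ℕ),
      algebraMap _ _ (Ideal.Quotient.mk (Ideal.span {t ^ n}) a) ^ l * f =
        algebraMap _ _ g)
    (hfb : ∃ (h : R ⧸ Ideal.span {t ^ n}) (k : ℕ),
      algebraMap _ _ (Ideal.Quotient.mk (Ideal.span {t ^ n}) b) ^ k * f =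
        algebraMap _ _ h) :
    ∃ s : R ⧸ Ideal.span {t ^ n}, f = algebraMap _ _ s := by
  obtain ⟨g, l, hg⟩ := hfa
  obtain ⟨h, k, hh⟩ := hfb
  exact RegularSequence.exists_eq_algebraMap_of_pow_mul_eq haS hbSa hg hh

/-- Let `R` be a commutative ring, `t, a, b ∈ R` with `a`, `b`
nonzerodivisors in `R`, `n ≥ 1`, and suppose `(a, b)` is a regular sequence in
`S := R/(tⁿ)` (i.e. `a` is a nonzerodivisor in `S` and `b` is a nonzerodivisor in
`S/(a)`).  Then inside `S[(ab)⁻¹]` the intersection of `S[a⁻¹]` and `S[b⁻¹]` is `S`: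
any `f` that can be written both as `g/aˡ` and as `h/bᵏ` lies in the image of `S`. -/
theorem stmt1 {R : Type*} [CommRing R] (t a b : R) (n : ℕ) (hn : 1 ≤ n)
    (ha : a ∈ nonZeroDivisors R) (hb : b ∈ nonZeroDivisors R)
    (haS : Ideal.Quotient.mk (Ideal.span {t ^ n}) a ∈
      nonZeroDivisors (R ⧸ Ideal.span {t ^ n}))
    (hbSa : Ideal.Quotient.mk
        (Ideal.span {Ideal.Quotient.mk (Ideal.span {t ^ n}) a}) (Ideal.Quotient.mk (Ideal.span {t ^ n}) b) ∈
      nonZeroDivisors ((R ⧸ Ideal.span {t ^ n}) ⧸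
        Ideal.span {Ideal.Quotient.mk (Ideal.span {t ^ n}) a}))
    (f : Localization.Away
      (Ideal.Quotient.mk (Ideal.span {t ^ n}) a * Ideal.Quotient.mk (Ideal.span {t ^ n}) b))
    (hfa : ∃ (g : R ⧸ Ideal.span {t ^ n}) (l : ℕ),
      algebraMap _ _ (Ideal.Quotient.mk (Ideal.span {t ^ n}) a) ^ l * f =
        algebraMap _ _ g)
    (hfb : ∃ (h : R ⧸ Ideal.span {t ^ n}) (k : ℕ),
      algebraMap _ _ (Ideal.Quotient.mk (Ideal.span {t ^ n}) b) ^ k * f =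
        algebraMap _ _ h) :
    ∃ s : R ⧸ Ideal.span {t ^ n}, f = algebraMap _ _ s :=
  stmt1_general t a b n haS hbSa f hfa hfb
end

section
/- Let φ : R → S be a ring map with the following two properties: (1) φ is injective; (2) every maximal ideal of R is the image (under Spec S → Spec R) of a prime of S lying in every fiber over a closed point — i.e. Spec(S) → Spec(R) hits all closed points of Spec(R). Let 0 → M₁ → M₂ → M₃ → 0 be a sequence of finite projective R-modules whose base change to S is a short exact sequence. Then the original sequence of R-modules is short exact. -/
/-!
Since `R → S` is injective and projective modules are flat, `M → S ⊗[R] M, m ↦ 1 ⊗ m` is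
injective; this gives injectivity of `g` and `h ∘ g = 0`. A finite module `N` with
`S ⊗[R] N = 0` is zero: at a closed point `m` of its support both `κ(m) ⊗[R] N` and
`κ(m) ⊗[R] S` are nonzero (the latter because `m` lies in the image of `Spec S`), hence so is
`κ(m) ⊗[R] (S ⊗[R] N) ≅ (κ(m) ⊗[R] S) ⊗[κ(m)] (κ(m) ⊗[R] N)`. Applied to cokernels, surjectivity
onto a finite module descends from `S` to `R`. This gives surjectivity of `h` and, for a section
`σ` of `h`, of `g.coprod σ : M₁ × M₃ → M₂`, which is exactness at `M₂`.
-/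

open TensorProduct

theorem TensorProduct.nontrivial_of_nontrivial_baseChange {R : Type*} [CommRing R]
    (k : Type*) [Field k] [Algebra R k]
    {M N : Type*} [AddCommGroup M] [AddCommGroup N] [Module R M] [Module R N]
    [Nontrivial (k ⊗[R] M)] [Nontrivial (k ⊗[R] N)] : Nontrivial (M ⊗[R] N) := by
  have : Nontrivial (k ⊗[R] (M ⊗[R] N)) :=
    (AlgebraTensorModule.distribBaseChange R k M N).toEquiv.nontrivial
  by_contra h
  rw [not_nontrivial_iff_subsingleton] at h
  exact not_subsingleton (k ⊗[R] (M ⊗[R] N)) inferInstance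

section ClosedPoints

variable {R S : Type*} [CommRing R] [CommRing S] [Algebra R S]

theorem Module.subsingleton_of_subsingleton_baseChange
    (hclosed : ∀ m : Ideal R, m.IsMaximal →
      ∃ q : Ideal S, q.IsPrime ∧ q.comap (algebraMap R S) = m)
    {N : Type*} [AddCommGroup N] [Module R N] [Module.Finite R N] [Subsingleton (S ⊗[R] N)] :
    Subsingleton N := by
  by_contra hN
  obtain ⟨m, hm, hann⟩ := Ideal.exists_le_maximal (Module.annihilator R N)
    (mt Module.annihilator_eq_top_iff.mp hN)
  let p : PrimeSpectrum R := ⟨m, hm.isPrime⟩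
  obtain ⟨q, hq, hqm⟩ := hclosed m hm
  have : Nontrivial (p.asIdeal.ResidueField ⊗[R] S) :=
    (PrimeSpectrum.nontrivial_iff_mem_rangeComap p).mpr ⟨⟨q, hq⟩, PrimeSpectrum.ext hqm⟩
  have : Nontrivial (p.asIdeal.ResidueField ⊗[R] N) :=
    (Module.mem_support_iff_nontrivial_residueField_tensorProduct p).mp
      (Module.mem_support_iff_of_finite.mpr hann)
  have := nontrivial_of_nontrivial_baseChange (R := R) p.asIdeal.ResidueField (M := S) (N := N)
  exact not_subsingleton (S ⊗[R] N) inferInstance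

theorem LinearMap.surjective_of_surjective_baseChange
    (hclosed : ∀ m : Ideal R, m.IsMaximal →
      ∃ q : Ideal S, q.IsPrime ∧ q.comap (algebraMap R S) = m)
    {P Q : Type*} [AddCommGroup P] [AddCommGroup Q] [Module R P] [Module R Q]
    [Module.Finite R Q] (f : P →ₗ[R] Q) (hf : Function.Surjective (f.baseChange S)) :
    Function.Surjective f := by
  rw [← LinearMap.range_eq_top, ← Submodule.Quotient.subsingleton_iff]
  have hzero : (range f).mkQ.baseChange S ∘ₗ f.baseChange S = 0 := by
    rw [← LinearMap.baseChange_comp, range_mkQ_comp, LinearMap.baseChange_zero]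
  have hsurj := ((range f).mkQ.baseChange_surjective S (range f).mkQ_surjective).comp hf
  have : Subsingleton (S ⊗[R] (Q ⧸ range f)) := by
    refine ⟨fun a b => ?_⟩
    obtain ⟨a, rfl⟩ := hsurj a
    obtain ⟨b, rfl⟩ := hsurj b
    simp only [← LinearMap.coe_comp, hzero, LinearMap.zero_apply]
  exact Module.subsingleton_of_subsingleton_baseChange hclosed

end ClosedPoints

section InjectiveAlgebraMap

variable {R S : Type*} [CommRing R] [CommRing S] [Algebra R S]
  {M N : Type*} [AddCommGroup M] [AddCommGroup N] [Module R M] [Module R N]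

theorem TensorProduct.mk_one_injective_of_flat (hinj : Function.Injective (algebraMap R S))
    [Module.Flat R M] : Function.Injective (TensorProduct.mk R S M 1) := by
  convert Module.Flat.rTensor_preserves_injective_linearMap (M := M) (Algebra.linearMap R S) hinj
    |>.comp (TensorProduct.lid R M).symm.injective
  ext; simp

theorem LinearMap.injective_of_injective_baseChange (hinj : Function.Injective (algebraMap R S))
    [Module.Flat R M] (f : M →ₗ[R] N) (hf : Function.Injective (f.baseChange S)) :
    Function.Injective f := by
  intro x y hxy
  apply mk_one_injective_of_flat (S := S) hinj
  apply hf
  simp [hxy]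

theorem LinearMap.eq_zero_of_baseChange_eq_zero (hinj : Function.Injective (algebraMap R S))
    [Module.Flat R N] (f : M →ₗ[R] N) (hf : f.baseChange S = 0) : f = 0 := by
  ext x
  apply mk_one_injective_of_flat (S := S) hinj
  simpa using congr($hf (1 ⊗ₜ x))

end InjectiveAlgebraMap

open LinearMap in
theorem LinearMap.exact_iff_range_sup_range_eq_top {R : Type*} [Ring R]
    {M₁ M₂ M₃ : Type*} [AddCommGroup M₁] [AddCommGroup M₂] [AddCommGroup M₃]
    [Module R M₁] [Module R M₂] [Module R M₃]
    {g : M₁ →ₗ[R] M₂} {h : M₂ →ₗ[R] M₃} {σ : M₃ →ₗ[R] M₂}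
    (hgh : h ∘ₗ g = 0) (hσ : h ∘ₗ σ = id) :
    Function.Exact g h ↔ range g ⊔ range σ = ⊤ := by
  have hσ' : ∀ z, h (σ z) = z := fun z => congr($hσ z)
  rw [LinearMap.exact_iff]
  constructor
  · intro hex
    refine eq_top_iff.mpr fun y _ => ?_
    have hy : y - σ (h y) ∈ range g := hex ▸ by simp [hσ']
    simpa using Submodule.add_mem_sup hy (mem_range_self σ (h y))
  · intro htop
    refine le_antisymm (fun y hy => ?_) (range_le_ker_iff.mpr hgh)
    obtain ⟨_, ⟨x, rfl⟩, _, ⟨z, rfl⟩, rfl⟩ :=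
      Submodule.mem_sup.mp (htop ▸ Submodule.mem_top : y ∈ range g ⊔ range σ)
    have hz : z = 0 := by simpa [hσ', ← comp_apply, hgh] using hy
    exact ⟨x, by simp [hz]⟩

open LinearMap in
theorem stmt11_general {R S : Type*} [CommRing R] [CommRing S] [Algebra R S]
    (hinj : Function.Injective (algebraMap R S))
    (hclosed : ∀ m : Ideal R, m.IsMaximal →
      ∃ q : Ideal S, q.IsPrime ∧ q.comap (algebraMap R S) = m)
    {M₁ M₂ M₃ : Type*} [AddCommGroup M₁] [AddCommGroup M₂] [AddCommGroup M₃]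
    [Module R M₁] [Module R M₂] [Module R M₃]
    [Module.Projective R M₁]
    [Module.Finite R M₂]
    [Module.Finite R M₃] [Module.Projective R M₃]
    (g : M₁ →ₗ[R] M₂) (h : M₂ →ₗ[R] M₃)
    (hS : Function.Injective (LinearMap.baseChange S g) ∧
      Function.Exact (LinearMap.baseChange S g) (LinearMap.baseChange S h) ∧
      Function.Surjective (LinearMap.baseChange S h)) :
    Function.Injective g ∧ Function.Exact g h ∧ Function.Surjective h := by
  obtain ⟨hgS, hexS, hhS⟩ := hS
  have hgh : h ∘ₗ g = 0 := eq_zero_of_baseChange_eq_zero hinj _ <| by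
    rw [baseChange_comp, hexS.linearMap_comp_eq_zero]
  have hh : Function.Surjective h := h.surjective_of_surjective_baseChange hclosed hhS
  obtain ⟨σ, hσ⟩ := Module.projective_lifting_property h LinearMap.id hh
  have hσS : h.baseChange S ∘ₗ σ.baseChange S = LinearMap.id := by
    rw [← baseChange_comp, hσ, baseChange_id]
  refine ⟨g.injective_of_injective_baseChange hinj hgS, ?_, hh⟩
  rw [exact_iff_range_sup_range_eq_top hgh hσ, ← range_coprod, range_eq_top]
  refine (g.coprod σ).surjective_of_surjective_baseChange hclosed (range_eq_top.mp ?_)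
  rw [eq_top_iff, ← (exact_iff_range_sup_range_eq_top hexS.linearMap_comp_eq_zero hσS).mp hexS]
  refine sup_le ?_ ?_
  · simpa only [← baseChange_comp, coprod_inl] using
      range_comp_le_range ((inl R M₁ M₃).baseChange S) ((g.coprod σ).baseChange S)
  · simpa only [← baseChange_comp, coprod_inr] using
      range_comp_le_range ((inr R M₁ M₃).baseChange S) ((g.coprod σ).baseChange S)

/-- [PR, Lemma 2.3.6]: let `R → S` be an injective ring map such that
`Spec S → Spec R` hits every closed point of `Spec R` (every maximal ideal of `R` is
the preimage of a prime of `S`).  If a sequence `0 → M₁ → M₂ → M₃ → 0` of finite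
projective `R`-modules becomes short exact after base change to `S`, then it is
short exact. -/
theorem stmt11 {R S : Type*} [CommRing R] [CommRing S] [Algebra R S]
    (hinj : Function.Injective (algebraMap R S))
    (hclosed : ∀ m : Ideal R, m.IsMaximal →
      ∃ q : Ideal S, q.IsPrime ∧ q.comap (algebraMap R S) = m)
    {M₁ M₂ M₃ : Type*} [AddCommGroup M₁] [AddCommGroup M₂] [AddCommGroup M₃]
    [Module R M₁] [Module R M₂] [Module R M₃]
    [Module.Finite R M₁] [Module.Projective R M₁]
    [Module.Finite R M₂] [Module.Projective R M₂]
    [Module.Finite R M₃] [Module.Projective R M₃]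
    (g : M₁ →ₗ[R] M₂) (h : M₂ →ₗ[R] M₃)
    (hS : Function.Injective (LinearMap.baseChange S g) ∧
      Function.Exact (LinearMap.baseChange S g) (LinearMap.baseChange S h) ∧
      Function.Surjective (LinearMap.baseChange S h)) :
    Function.Injective g ∧ Function.Exact g h ∧ Function.Surjective h :=
  stmt11_general hinj hclosed g h hS
end

section
/- Let B₀ be a ring complete and separated for the ϖ-adic topology for a fixed ϖ ∈ B₀, let B = B₀[1/ϖ], A a B-module which is finitely generated, and A₀ ⊆ A a finitely generated B₀-submodule with A₀ ⊗_{B₀} B = A (i.e. A₀ generates A after inverting ϖ). Give A the quotient topology from any surjection B^k ↠ A (with B given the topology with B₀ open and ϖⁿB₀ a neighbourhood basis of 0). Then {ϖⁿ·A₀ : n ∈ ℕ} is a neighbourhood basis of 0 in A, and this topology is independent of the chosen surjection. -/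
open Pointwise

/-- Lemma `topologyOnMCA` of the paper: let `B₀` be a ring with the
`ϖ`-adic topology, `B = B₀[1/ϖ]`, `A` a finitely generated `B`-module with the
quotient topology from a surjection `p : Bᵏ ↠ A`, and `A₀ ⊆ A` a finitely generated
`B₀`-submodule with `A₀ ⊗_{B₀} B = A`.  Then a subset `U ∋ 0` of `A` is a
neighbourhood of `0` — i.e. contains `ϖⁿ·p(B₀ᵏ)` for some `n` — iff it contains
`ϖⁿ·A₀` for some `n`.  In particular `{ϖⁿ·A₀}` is a neighbourhood basis of `0` and
the topology is independent of the chosen surjection. -/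
theorem stmt13 {B₀ : Type*} [CommRing B₀] (ϖ : B₀)
    {B : Type*} [CommRing B] [Algebra B₀ B] [IsLocalization.Away ϖ B]
    {A : Type*} [AddCommGroup A] [Module B A] [Module B₀ A] [IsScalarTower B₀ B A]
    [Module.Finite B A]
    (A₀ : Submodule B₀ A) (hfg : A₀.FG)
    (hspan : Submodule.span B (A₀ : Set A) = ⊤)
    (k : ℕ) (p : (Fin k → B) →ₗ[B] A) (hp : Function.Surjective p)
    (U : Set A) (hU : (0 : A) ∈ U) :
    (∃ n : ℕ,
        ϖ ^ n • (p '' {v : Fin k → B | ∀ i, ∃ b : B₀, v i = algebraMap B₀ B b}) ⊆ U)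
      ↔ (∃ n : ℕ, ϖ ^ n • (A₀ : Set A) ⊆ U) := by
  -- clearing denominators in B
  have clear : ∀ b : B, ∃ (m : ℕ) (c : B₀), ϖ ^ m • b = algebraMap B₀ B c := by
    intro b
    obtain ⟨⟨m', hm'⟩, c, hc⟩ := IsLocalization.exists_integer_multiple (Submonoid.powers ϖ) b
    obtain ⟨m, rfl⟩ := hm'
    exact ⟨m, c, hc.symm⟩
  set S : Set (Fin k → B) := {v : Fin k → B | ∀ i, ∃ b : B₀, v i = algebraMap B₀ B b} with hS
  -- the image N = p(S) as a B₀-submodule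
  set M₀ : Submodule B₀ (Fin k → B) :=
    Submodule.pi Set.univ (fun _ => LinearMap.range (Algebra.linearMap B₀ B)) with hM₀
  set N : Submodule B₀ A := Submodule.map (p.restrictScalars B₀) M₀ with hN
  have hSM : S = (M₀ : Set (Fin k → B)) := by
    ext v
    simp [hS, hM₀, Submodule.mem_pi, Algebra.linearMap_apply, eq_comm]
  have hNimg : (N : Set A) = p '' S := by
    rw [hSM, hN]
    rfl
  -- every element of A lands in N after multiplying by a power of ϖ
  have hAtoN : ∀ x : A, ∃ m : ℕ, ϖ ^ m • x ∈ N := by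
    intro x
    obtain ⟨v, rfl⟩ := hp x
    have hco : ∀ i : Fin k, ∃ (m : ℕ) (c : B₀), ϖ ^ m • v i = algebraMap B₀ B c :=
      fun i => clear (v i)
    choose m c hc using hco
    refine ⟨Finset.univ.sup m, ?_⟩
    refine ⟨(ϖ ^ Finset.univ.sup m : B₀) • v, ?_, ?_⟩
    · intro i _
      refine ⟨ϖ ^ (Finset.univ.sup m - m i) * c i, ?_⟩
      have hle : m i ≤ Finset.univ.sup m := Finset.le_sup (Finset.mem_univ i)
      have : (ϖ ^ Finset.univ.sup m : B₀) • v i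
          = ϖ ^ (Finset.univ.sup m - m i) • (ϖ ^ (m i) • v i) := by
        rw [smul_smul, ← pow_add, Nat.sub_add_cancel hle]
      simp only [Pi.smul_apply, Algebra.linearMap_apply, this, hc i,
        Algebra.smul_def, ← map_mul]
    · show p ((ϖ ^ Finset.univ.sup m : B₀) • v) = ϖ ^ Finset.univ.sup m • p v
      rw [← algebraMap_smul B (ϖ ^ Finset.univ.sup m) v, map_smul, algebraMap_smul]
  -- every element of A lands in A₀ after multiplying by a power of ϖ
  have hAtoA₀ : ∀ x : A, ∃ m : ℕ, ϖ ^ m • x ∈ A₀ := by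
    intro x
    have hx : x ∈ Submodule.span B (A₀ : Set A) := by rw [hspan]; trivial
    induction hx using Submodule.span_induction with
    | mem a ha => exact ⟨0, by simpa using ha⟩
    | zero => exact ⟨0, by simp⟩
    | add a b _ _ iha ihb =>
        obtain ⟨m₁, h₁⟩ := iha
        obtain ⟨m₂, h₂⟩ := ihb
        refine ⟨m₁ + m₂, ?_⟩
        rw [smul_add]
        refine A₀.add_mem ?_ ?_
        · rw [add_comm m₁ m₂, pow_add, mul_smul]
          exact A₀.smul_mem _ h₁
        · rw [pow_add, mul_smul]
          exact A₀.smul_mem _ h₂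
    | smul b a _ ih =>
        obtain ⟨m, hm⟩ := ih
        obtain ⟨s, cb, hcb⟩ := clear b
        refine ⟨s + m, ?_⟩
        have : ϖ ^ (s + m) • (b • a) = cb • (ϖ ^ m • a) := by
          rw [pow_add, mul_smul, ← algebraMap_smul B cb (ϖ ^ m • a), ← hcb,
            smul_assoc, smul_comm b (ϖ ^ m) a, ← smul_assoc, ← smul_assoc]
        rw [this]
        exact A₀.smul_mem _ hm
  constructor
  · -- forward: nbhd from p(B₀ᵏ) gives nbhd from A₀
    rintro ⟨n, hn⟩
    obtain ⟨T, hT⟩ := hfg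
    classical
    set g : A → ℕ := fun t => (hAtoN t).choose with hg
    set M : ℕ := T.sup g with hM
    have key : ∀ a ∈ A₀, ϖ ^ M • a ∈ N := by
      have : A₀ ≤ N.comap (DistribMulAction.toLinearMap B₀ A (ϖ ^ M)) := by
        rw [← hT]
        refine Submodule.span_le.2 ?_
        intro t ht
        have hgt : ϖ ^ (g t) • t ∈ N := (hAtoN t).choose_spec
        have hle : g t ≤ M := Finset.le_sup ht
        show ϖ ^ M • t ∈ N
        have : ϖ ^ M • t = ϖ ^ (M - g t) • (ϖ ^ (g t) • t) := by
          rw [smul_smul, ← pow_add, Nat.sub_add_cancel hle]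
        rw [this]
        exact N.smul_mem _ hgt
      intro a ha
      exact this ha
    refine ⟨n + M, ?_⟩
    intro x hx
    obtain ⟨a, ha, rfl⟩ := hx
    show ϖ ^ (n + M) • a ∈ U
    have : ϖ ^ (n + M) • a = ϖ ^ n • (ϖ ^ M • a) := by
      rw [smul_smul, ← pow_add]
    rw [this]
    apply hn
    have : ϖ ^ M • a ∈ (N : Set A) := key a ha
    rw [hNimg] at this
    exact Set.smul_mem_smul_set this
  · -- backward: nbhd from A₀ gives nbhd from p(B₀ᵏ)
    rintro ⟨n, hn⟩
    classical
    set g : Fin k → ℕ := fun i => (hAtoA₀ (p (Pi.single i 1))).choose with hg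
    set M : ℕ := Finset.univ.sup g with hM
    have key : ∀ v ∈ S, ϖ ^ M • p v ∈ A₀ := by
      intro v hv
      choose b hb using hv
      have hv' : v = ∑ i : Fin k, v i • (Pi.single i (1 : B) : Fin k → B) := by
        funext j
        simp [Pi.single_apply, Finset.sum_apply]
      have : p v = ∑ i : Fin k, v i • p (Pi.single i 1) := by
        conv_lhs => rw [hv']
        simp
      rw [this, Finset.smul_sum]
      refine Submodule.sum_mem A₀ ?_
      intro i _
      have h1 : ϖ ^ (g i) • p (Pi.single i 1) ∈ A₀ := (hAtoA₀ (p (Pi.single i 1))).choose_spec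
      have hle : g i ≤ M := Finset.le_sup (Finset.mem_univ i)
      have e1 : ϖ ^ (M - g i) • (ϖ ^ (g i) • p (Pi.single i 1))
          = ϖ ^ M • p (Pi.single i 1) := by
        rw [smul_smul, ← pow_add, Nat.sub_add_cancel hle]
      have : ϖ ^ M • v i • p (Pi.single i 1)
          = b i • (ϖ ^ (M - g i) • (ϖ ^ (g i) • p (Pi.single i 1))) := by
        rw [e1, smul_comm (ϖ ^ M) (v i), hb i, algebraMap_smul]
      rw [this]
      exact A₀.smul_mem _ (A₀.smul_mem _ h1)
    refine ⟨n + M, ?_⟩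
    intro x hx
    obtain ⟨y, hy, rfl⟩ := hx
    obtain ⟨v, hv, rfl⟩ := hy
    show ϖ ^ (n + M) • p v ∈ U
    have : ϖ ^ (n + M) • p v = ϖ ^ n • (ϖ ^ M • p v) := by
      rw [smul_smul, ← pow_add]
    rw [this]
    exact hn (Set.smul_mem_smul_set (key v hv))
end

section
/- Let R be a commutative ring and let I be the set of equivalence classes of ring maps from R to valuation rings, where two maps R → V, R → V' are equivalent if there is a valuation ring W with injective local homomorphisms V → W ← V' commuting with the maps from R. Then each equivalence class contains a minimal representative: given v : R → V, the subring Frac(im(v)) ∩ V of Frac(V) is a valuation ring, the map R → V factors through it, and it maps to V by an injective local homomorphism. -/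
/-!
Inside `K = Frac V`, the ring `V` is a valuation subring and `F = Frac(im v)` is a subfield, so
`F ∩ V` is the restriction of that valuation subring to `F`, hence a valuation ring. It embeds
into `V` because `V → K` is injective, and the embedding is local: if an element of `F ∩ V` is a
unit of `V`, its inverse lies in `V` and, being the inverse of an element of `F`, also in `F`.
-/

variable {R : Type*} [CommRing R] (V : Type*) [CommRing V] [IsDomain V] [ValuationRing V]

/-- The subring `Frac(im v) ∩ V` of `Frac(V)`. -/
noncomputable def stmt16V' (v : R →+* V) : Subring (FractionRing V) :=
  (Subfield.closure
      (Set.range ((algebraMap V (FractionRing V)).comp v))).toSubring ⊓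
    (algebraMap V (FractionRing V)).range

section

variable {K : Type*} [Field K]

theorem ValuationSubring.valuationRing_subfield_inf (A : ValuationSubring K) (F : Subfield K) :
    ValuationRing ↥(F.toSubring ⊓ A.toSubring) := by
  have h : (A.comap F.subtype).toSubring.map F.subtype = F.toSubring ⊓ A.toSubring := by
    rw [inf_comm]
    exact Subring.map_comap_eq F.subtype A.toSubring |>.trans (by ext; simp)
  rw [← h]
  let e := Subring.equivMapOfInjective (A.comap F.subtype).toSubring F.subtype F.subtype_injective
  exact Function.Surjective.valuationRing (R := A.comap F.subtype) e.toRingHom e.surjective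

theorem Subring.isUnit_of_inv_mem {T : Subring K} {x : T} (hx : (x : K) ≠ 0)
    (hinv : (x : K)⁻¹ ∈ T) : IsUnit x :=
  .of_mul_eq_one ⟨_, hinv⟩ (Subtype.ext (mul_inv_cancel₀ hx))

theorem RingHom.exists_injective_isLocalHom_inf_range {A : Type*} [CommRing A] {f : A →+* K}
    (hf : Function.Injective f) (F : Subfield K) :
    ∃ g : ↥(F.toSubring ⊓ f.range) →+* A,
      Function.Injective g ∧ IsLocalHom g ∧ ∀ x, f (g x) = x := by
  let e : A ≃+* f.range := RingEquiv.ofLeftInverse (Function.leftInverse_invFun hf)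
  let g := (e.symm : f.range →+* A).comp (Subring.inclusion (inf_le_right (a := F.toSubring)))
  have hfg : ∀ x, f (g x) = x := fun x => congrArg Subtype.val (e.apply_symm_apply _)
  refine ⟨g, e.symm.injective.comp (Subring.inclusion_injective _), ⟨fun x hx => ?_⟩, hfg⟩
  have hx0 : (x : K) ≠ 0 := by rw [← hfg x]; exact (hx.map f).ne_zero
  refine Subring.isUnit_of_inv_mem hx0 ⟨F.inv_mem x.2.1, ↑hx.unit⁻¹, ?_⟩
  rw [map_units_inv, IsUnit.unit_spec, hfg]

end

/-- given a ring map `v : R → V` to a valuation ring, the subring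
`V' := Frac(im v) ∩ V` of `Frac(V)` is a valuation ring, the map `R → V` factors
through it, and `V'` maps to `V` by an injective local homomorphism. -/
theorem stmt16 (v : R →+* V) :
    ValuationRing (stmt16V' V v) ∧
    (∀ r : R, algebraMap V (FractionRing V) (v r) ∈ stmt16V' V v) ∧
    ∃ g : stmt16V' V v →+* V, Function.Injective g ∧
      (∀ x : stmt16V' V v, IsUnit (g x) → IsUnit x) ∧
      ∀ x : stmt16V' V v, algebraMap V (FractionRing V) (g x) = (x : FractionRing V) := by
  set K := FractionRing V
  set F := Subfield.closure (Set.range ((algebraMap V K).comp v))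
  have hV' :
      stmt16V' V v = F.toSubring ⊓ (ValuationRing.valuation V K).valuationSubring.toSubring :=
    congrArg (F.toSubring ⊓ ·) (ValuationRing.range_algebraMap_eq V K).symm
  obtain ⟨g, hg_inj, hg_local, hg⟩ :=
    RingHom.exists_injective_isLocalHom_inf_range (IsFractionRing.injective V K) F
  exact ⟨hV' ▸ ValuationSubring.valuationRing_subfield_inf _ F,
    fun r => ⟨Subfield.subset_closure ⟨r, rfl⟩, v r, rfl⟩,
    g, hg_inj, hg_local.map_nonunit, hg⟩
end
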